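/- arXiv:1001.3983 — 3 statements merged into one kernel-verified Lean document; each statement's English description precedes it below -/
import Mathlib

section
/- Let B be a bounded quasinilpotent operator on a Hilbert space H, f, g ∈ H, and define the entire function φ(z) := 1 − z⟨(I − zB)⁻¹ g, f⟩. If λ ∈ ℂ satisfies φ(λ) ≠ 0 and λ ≠ 0, then the operator K h := B h + ⟨h,f⟩ g satisfies: K h = λ⁻¹ h has only the trivial solution h = 0, i.e. λ⁻¹ is not an eigenvalue of K, equivalently, K − λ⁻¹ I is injective. -/
theorem nonzero_fredholm_det_injective
    {H : Type*} [NormedAddCommGroup H] [InnerProductSpace ℂ H] [CompleteSpace H]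
    (B : H →L[ℂ] H) (hB : spectrum ℂ B = {0}) (f g : H)
    (K : H →L[ℂ] H) (hK : ∀ h : H, K h = B h + (inner ℂ f h : ℂ) • g)
    (φ : ℂ → ℂ)
    (hφ : ∀ z : ℂ, φ z = 1 - z * (inner ℂ f ((Ring.inverse (1 - z • B) : H →L[ℂ] H) g) : ℂ))
    (lam : ℂ) (hlam0 : lam ≠ 0) (hφlam : φ lam ≠ 0) :
    ∀ h : H, K h = lam⁻¹ • h → h = 0 := by
  intro h heig
  -- lam⁻¹ is not in the spectrum of B
  have hmem : lam⁻¹ ∉ spectrum ℂ B := by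
    rw [hB]
    simp [inv_ne_zero hlam0]
  have hu1 : IsUnit (algebraMap ℂ (H →L[ℂ] H) lam⁻¹ - B) :=
    (spectrum.notMem_iff).mp hmem
  have hu : IsUnit ((1 : H →L[ℂ] H) - lam • B) := by
    have : (1 : H →L[ℂ] H) - lam • B
        = algebraMap ℂ (H →L[ℂ] H) lam * (algebraMap ℂ (H →L[ℂ] H) lam⁻¹ - B) := by
      rw [mul_sub, ← map_mul, mul_inv_cancel₀ hlam0, map_one, Algebra.smul_def]
    rw [this]
    exact ((algebraMap ℂ (H →L[ℂ] H)).isUnit_map (isUnit_iff_ne_zero.mpr hlam0)).mul hu1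
  set u : H →L[ℂ] H := (1 : H →L[ℂ] H) - lam • B with hudef
  set T : H →L[ℂ] H := Ring.inverse u with hTdef
  set c : ℂ := (inner ℂ f h : ℂ) with hcdef
  -- u h = (lam * c) • g
  have key : u h = (lam * c) • g := by
    have h1 : B h + c • g = lam⁻¹ • h := by rw [← hK]; exact heig
    have h2 : lam • (B h + c • g) = h := by
      rw [h1, smul_smul, mul_inv_cancel₀ hlam0, one_smul]
    have h3 : lam • B h + (lam * c) • g = h := by
      rw [smul_add, smul_smul] at h2; exact h2
    calc u h = h - lam • B h := by
          simp [hudef, ContinuousLinearMap.sub_apply, ContinuousLinearMap.smul_apply]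
      _ = (lam * c) • g := (eq_sub_of_add_eq' h3).symm
  have hTu : ∀ x : H, T (u x) = x := by
    intro x
    have := Ring.inverse_mul_cancel u hu
    calc T (u x) = (T * u) x := rfl
      _ = x := by rw [this]; rfl
  have hh : h = (lam * c) • T g := by
    have := hTu h
    rw [key] at this
    rw [← this, map_smul]
  -- take inner product with f
  have hinner : c = (lam * c) * (inner ℂ f (T g) : ℂ) := by
    rw [hcdef]
    nth_rewrite 1 [hh]
    rw [inner_smul_right]
  have hphival : φ lam = 1 - lam * (inner ℂ f (T g) : ℂ) := by rw [hφ lam]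
  have hc : c = 0 := by
    have : c * φ lam = 0 := by
      rw [hphival]; ring_nf
      rw [mul_comm] at hinner
      linear_combination hinner
    rcases mul_eq_zero.mp this with h0 | h0
    · exact h0
    · exact absurd h0 hφlam
  rw [hh, hc, mul_zero, zero_smul]
end

section
/- Let B be a bounded quasinilpotent operator on a Hilbert space H and f, g ∈ H. Define g(z) := (I − zB)⁻¹ g, f_*(z) := (I + zB*)⁻¹ f, and φ(z) := 1 − z⟨g(z), f⟩. Then for all λ, μ ∈ ℂ with λ ≠ μ: ⟨g(λ), f_*(−conj(μ))⟩ = (φ(λ) − φ(μ))/(μ − λ). -/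
/-!
Quasinilpotency makes every `1 - z • B` invertible; write `R z` for its inverse. Since
`1 + (-conj μ) • B† = (1 - μ • B)†`, the vector `f_*(-conj μ)` is `(R μ)† f`, so the left-hand
side is `⟪f, R μ (R λ g)⟫`. The resolvent identity `μ R μ - λ R λ = (μ - λ) R μ R λ`, paired
with `f` and applied to `g`, is exactly `φ λ - φ μ = (μ - λ) ⟪f, R μ (R λ g)⟫`.
-/

open ContinuousLinearMap

theorem isUnit_one_sub_smul_of_spectrum_subset_zero {𝕜 A : Type*} [Field 𝕜] [Ring A]
    [Algebra 𝕜 A] {a : A} (ha : spectrum 𝕜 a ⊆ {0}) (z : 𝕜) : IsUnit (1 - z • a) := by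
  rcases eq_or_ne z 0 with rfl | hz
  · simp
  have hinv : IsUnit (algebraMap 𝕜 A z⁻¹ - a) :=
    spectrum.notMem_iff.mp fun h => inv_ne_zero hz (ha h)
  have : 1 - z • a = algebraMap 𝕜 A z * (algebraMap 𝕜 A z⁻¹ - a) := by
    rw [mul_sub, ← map_mul, mul_inv_cancel₀ hz, map_one, Algebra.smul_def]
  rw [this]
  exact ((isUnit_iff_ne_zero.mpr hz).map _).mul hinv

theorem inverse_one_sub_smul_sub_inverse_one_sub_smul {R A : Type*} [CommRing R] [Ring A]
    [Algebra R A] {a : A} {lam mu : R} (hlam : IsUnit (1 - lam • a)) (hmu : IsUnit (1 - mu • a)) :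
    mu • Ring.inverse (1 - mu • a) - lam • Ring.inverse (1 - lam • a) =
      (mu - lam) • (Ring.inverse (1 - mu • a) * Ring.inverse (1 - lam • a)) := by
  set u := 1 - lam • a
  set v := 1 - mu • a
  have hmid : mu • u - lam • v = (mu - lam) • (1 : A) := by
    simp only [u, v, smul_sub, smul_smul, mul_comm mu lam, sub_smul]
    abel
  calc mu • Ring.inverse v - lam • Ring.inverse u
      = Ring.inverse v * (mu • u - lam • v) * Ring.inverse u := by
        rw [mul_sub, sub_mul, mul_smul_comm, mul_smul_comm, smul_mul_assoc, smul_mul_assoc,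
          mul_assoc, Ring.mul_inverse_cancel u hlam, Ring.inverse_mul_cancel v hmu, mul_one,
          one_mul]
    _ = (mu - lam) • (Ring.inverse v * Ring.inverse u) := by
        rw [hmid, mul_smul_comm, mul_one, smul_mul_assoc]

theorem star_one_sub_smul {A : Type*} [Ring A] [StarRing A] [Module ℂ A] [StarModule ℂ A]
    (a : A) (z : ℂ) : star (1 - z • a) = 1 + (-(starRingEnd ℂ z)) • star a := by
  rw [star_sub, star_one, star_smul, neg_smul, ← sub_eq_add_neg]
  rfl

theorem biorthogonality_identity
    {H : Type*} [NormedAddCommGroup H] [InnerProductSpace ℂ H] [CompleteSpace H]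
    (B : H →L[ℂ] H) (hB : spectrum ℂ B = {0}) (f g : H)
    (gfun : ℂ → H) (hg : ∀ z : ℂ, gfun z = (Ring.inverse (1 - z • B) : H →L[ℂ] H) g)
    (fstar : ℂ → H)
    (hf : ∀ w : ℂ,
      fstar w = (Ring.inverse (1 + w • ContinuousLinearMap.adjoint B) : H →L[ℂ] H) f)
    (φ : ℂ → ℂ) (hφ : ∀ z : ℂ, φ z = 1 - z * (inner ℂ f (gfun z) : ℂ)) :
    ∀ lam mu : ℂ, lam ≠ mu →
      (inner ℂ (fstar (-(starRingEnd ℂ mu))) (gfun lam) : ℂ) = (φ lam - φ mu) / (mu - lam) := by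
  intro lam mu hne
  have hunit := isUnit_one_sub_smul_of_spectrum_subset_zero hB.subset
  have hfstar : fstar (-(starRingEnd ℂ mu)) = adjoint (Ring.inverse (1 - mu • B)) f := by
    rw [hf, ← star_eq_adjoint, ← star_eq_adjoint, ← Ring.inverse_star, star_one_sub_smul]
  have hres := congrArg (fun T : H →L[ℂ] H => inner ℂ f (T g))
    (inverse_one_sub_smul_sub_inverse_one_sub_smul (hunit lam) (hunit mu))
  simp only [sub_apply, smul_apply, mul_apply_eq_comp, inner_sub_right, inner_smul_right] at hres
  rw [eq_div_iff (sub_ne_zero.mpr hne.symm), hfstar, adjoint_inner_left, hφ, hφ, hg, hg]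
  linear_combination -hres
end

section
/- Let V : [0,∞) → B(H) be a strongly continuous semigroup on a Hilbert space with V(0) = I, and let a > 0. Suppose B is a bounded operator satisfying −iB(I − zB)⁻¹ h = ∫₀ᵃ e^{izt} V(t) h dt for all h ∈ H and z ∈ ℂ. Then for every c > 0 there is M = M(c) > 0 such that ‖B(I − zB)⁻¹‖ ≤ M/(1 + |Im z|) for all z with Im z ≥ −c. -/
/-! Strong continuity makes `V` bounded on `[0, a]` (Banach–Steinhaus), say by `C`. The
representation then bounds `‖B (1 - zB)⁻¹‖` by `C ∫₀ᵃ e^{-s t} dt` with `s = Im z`, and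
`(1 + |s|) ∫₀ᵃ e^{-s t} dt ≤ (1 + a) e^{c a}` for `s ≥ -c` because
`s ∫₀ᵃ e^{-s t} dt = 1 - e^{-s a}`. -/

open MeasureTheory Set

theorem IsCompact.exists_bound_opNorm_of_continuousOn_apply {X 𝕜 E F : Type*}
    [TopologicalSpace X] [NontriviallyNormedField 𝕜] [NormedAddCommGroup E] [NormedSpace 𝕜 E]
    [CompleteSpace E] [NormedAddCommGroup F] [NormedSpace 𝕜 F]
    {V : X → E →L[𝕜] F} {s : Set X} (hs : IsCompact s)
    (hV : ∀ x, ContinuousOn (fun t => V t x) s) : ∃ C, ∀ t ∈ s, ‖V t‖ ≤ C := by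
  obtain ⟨C, hC⟩ := banach_steinhaus (g := fun t : s => V t) fun x => by
    obtain ⟨C, hC⟩ := hs.exists_bound_of_continuousOn (hV x)
    exact ⟨C, fun t => hC t t.2⟩
  exact ⟨C, fun t ht => hC ⟨t, ht⟩⟩

namespace Real

theorem mul_integral_exp_neg_mul (s a : ℝ) :
    s * ∫ t in (0:ℝ)..a, exp (-s * t) = 1 - exp (-s * a) := by
  rcases eq_or_ne s 0 with rfl | hs
  · simp
  rw [intervalIntegral.integral_comp_mul_left (fun x => exp x) (neg_ne_zero.mpr hs),
    integral_exp, smul_eq_mul, mul_zero, exp_zero]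
  field_simp
  ring

theorem integral_exp_neg_mul_le {s a c : ℝ} (ha : 0 ≤ a) (hc : 0 ≤ c) (hs : -c ≤ s) :
    ∫ t in (0:ℝ)..a, exp (-s * t) ≤ a * exp (c * a) := by
  calc ∫ t in (0:ℝ)..a, exp (-s * t) ≤ ∫ _ in (0:ℝ)..a, exp (c * a) := by
        refine intervalIntegral.integral_mono_on ha
          ((by fun_prop : Continuous _).intervalIntegrable _ _) intervalIntegrable_const
          fun t ht => exp_le_exp.mpr (by nlinarith [ht.1, ht.2])
    _ = a * exp (c * a) := by simp

theorem abs_mul_integral_exp_neg_mul_le {s a c : ℝ} (ha : 0 ≤ a) (hc : 0 ≤ c)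
    (hs : -c ≤ s) : |s| * ∫ t in (0:ℝ)..a, exp (-s * t) ≤ exp (c * a) := by
  have hJ : 0 ≤ ∫ t in (0:ℝ)..a, exp (-s * t) :=
    intervalIntegral.integral_nonneg ha fun t _ => (exp_pos _).le
  have h1 : 1 ≤ exp (c * a) := one_le_exp (mul_nonneg hc ha)
  have h2 : exp (-s * a) ≤ exp (c * a) := exp_le_exp.mpr (by nlinarith)
  rw [← abs_of_nonneg hJ, ← abs_mul, mul_integral_exp_neg_mul, abs_sub_le_iff]
  constructor <;> linarith [exp_pos (-s * a)]

theorem one_add_abs_mul_integral_exp_neg_mul_le {s a c : ℝ} (ha : 0 ≤ a) (hc : 0 ≤ c)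
    (hs : -c ≤ s) : (1 + |s|) * ∫ t in (0:ℝ)..a, exp (-s * t) ≤ (1 + a) * exp (c * a) := by
  linarith [integral_exp_neg_mul_le ha hc hs, abs_mul_integral_exp_neg_mul_le ha hc hs]

end Real

theorem norm_integral_cexp_I_mul_smul_le {E : Type*} [NormedAddCommGroup E] [NormedSpace ℂ E]
    {f : ℝ → E} {a C : ℝ} (ha : 0 ≤ a) (hf : ∀ t ∈ Icc 0 a, ‖f t‖ ≤ C) (z : ℂ) :
    ‖∫ t in (0:ℝ)..a, Complex.exp (Complex.I * z * t) • f t‖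
      ≤ C * ∫ t in (0:ℝ)..a, Real.exp (-z.im * t) := by
  rw [← intervalIntegral.integral_const_mul]
  refine intervalIntegral.norm_integral_le_of_norm_le ha (ae_of_all _ fun t ht => ?_)
    ((by fun_prop : Continuous _).intervalIntegrable _ _)
  have hre : (Complex.I * z * t).re = -z.im * t := by simp [Complex.mul_re]
  rw [norm_smul, Complex.norm_exp, hre, mul_comm]
  exact mul_le_mul_of_nonneg_right (hf t (Ioc_subset_Icc_self ht)) (Real.exp_pos _).le

theorem resolvent_decay_from_semigroup_general
    {H : Type*} [NormedAddCommGroup H] [InnerProductSpace ℂ H] [CompleteSpace H]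
    (V : ℝ → (H →L[ℂ] H))
    (hVcont : ∀ h : H, ContinuousOn (fun t => V t h) (Set.Ici 0))
    (a : ℝ) (ha : 0 < a)
    (B : H →L[ℂ] H)
    (hrep : ∀ (h : H) (z : ℂ),
      (-Complex.I) • ((B * (Ring.inverse (1 - z • B))) h)
        = ∫ t in (0:ℝ)..a, Complex.exp (Complex.I * z * t) • V t h) :
    ∀ c : ℝ, 0 < c → ∃ M : ℝ, 0 < M ∧ ∀ z : ℂ, -c ≤ z.im →
      ‖B * (Ring.inverse (1 - z • B))‖ ≤ M / (1 + |z.im|) := by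
  intro c hc
  obtain ⟨C₀, hC₀⟩ :=
    (isCompact_Icc (a := 0) (b := a)).exists_bound_opNorm_of_continuousOn_apply
    fun h => (hVcont h).mono Icc_subset_Ici_self
  set C := max C₀ 1
  have hC : 0 < C := lt_max_of_lt_right one_pos
  refine ⟨C * ((1 + a) * Real.exp (c * a)), by positivity, fun z hz => ?_⟩
  set J := ∫ t in (0:ℝ)..a, Real.exp (-z.im * t)
  have hR : ‖B * Ring.inverse (1 - z • B)‖ ≤ C * J := by
    refine ContinuousLinearMap.opNorm_le_bound _ (mul_nonneg hC.le
      (intervalIntegral.integral_nonneg ha.le fun t _ => (Real.exp_pos _).le)) fun h => ?_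
    have hVh : ∀ t ∈ Icc 0 a, ‖V t h‖ ≤ C * ‖h‖ := fun t ht =>
      (V t).le_of_opNorm_le ((hC₀ t ht).trans (le_max_left _ _)) h
    calc ‖(B * Ring.inverse (1 - z • B)) h‖
        = ‖∫ t in (0:ℝ)..a, Complex.exp (Complex.I * z * t) • V t h‖ := by
          rw [← hrep, norm_smul]; simp
      _ ≤ C * ‖h‖ * J := norm_integral_cexp_I_mul_smul_le ha.le hVh z
      _ = _ := by ring
  rw [le_div_iff₀ (by positivity)]
  calc ‖B * Ring.inverse (1 - z • B)‖ * (1 + |z.im|) ≤ C * ((1 + |z.im|) * J) := by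
        nlinarith [abs_nonneg z.im]
    _ ≤ C * ((1 + a) * Real.exp (c * a)) := mul_le_mul_of_nonneg_left
        (Real.one_add_abs_mul_integral_exp_neg_mul_le ha.le hc.le hz) hC.le

theorem resolvent_decay_from_semigroup
    {H : Type*} [NormedAddCommGroup H] [InnerProductSpace ℂ H] [CompleteSpace H]
    (V : ℝ → (H →L[ℂ] H)) (hV0 : V 0 = 1)
    (hVcont : ∀ h : H, ContinuousOn (fun t => V t h) (Set.Ici 0))
    (a : ℝ) (ha : 0 < a)
    (B : H →L[ℂ] H)
    (hrep : ∀ (h : H) (z : ℂ),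
      (-Complex.I) • ((B * (Ring.inverse (1 - z • B))) h)
        = ∫ t in (0:ℝ)..a, Complex.exp (Complex.I * z * t) • V t h) :
    ∀ c : ℝ, 0 < c → ∃ M : ℝ, 0 < M ∧ ∀ z : ℂ, -c ≤ z.im →
      ‖B * (Ring.inverse (1 - z • B))‖ ≤ M / (1 + |z.im|) :=
  resolvent_decay_from_semigroup_general V hVcont a ha B hrep
end
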